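/- Let A be a finite-dimensional K-algebra, let Z be a finite-dimensional A-module having no nonzero projective direct summand, let X be a finite-dimensional A-module, and let f : Z → X be a nonzero morphism. Then the induced epimorphism f' : Z → im f does not factor through any projective A-module; that is, there is no projective module P with morphisms g : Z → P and h : P → im f such that h ∘ g = f'. -/

import Mathlib

/-
Lift `h` along the epimorphism `f'` to `k : P → Z`. Then `e = k ∘ g` is an endomorphism of `Z`
factoring through `P` with `f' ∘ e = f'`. By Fitting's lemma, for large `N` the module `Z` splits as
`ker eᴺ ⊕ range eᴺ` with `eᴺ` an automorphism of `range eᴺ`; since `eᴺ` factors through `P`, this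
makes `range eᴺ` a retract of `P`, i.e. a projective summand of `Z`, hence zero. So `e` is nilpotent,
`1 - e` is invertible, and `f' ∘ (1 - e) = 0` forces `f' = 0`.
-/

open CategoryTheory

universe u

noncomputable instance (A : Type u) [Ring A] : HasDerivedCategory.{u+1} (ModuleCat.{u} A) :=
  HasDerivedCategory.standard _

instance (A : Type u) [Ring A] : HasExt.{u+1} (ModuleCat.{u} A) :=
  hasExt_of_hasDerivedCategory _

variable (A : Type u) [Ring A]

/-- The category `mod A` of finite-dimensional (equivalently, finitely generated)
`A`-modules, viewed as the set of objects of `ModuleCat A` that are finite over `A`. -/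
def fdMod : Set (ModuleCat.{u} A) := {M | Module.Finite A M}

/-- `f : X ⟶ M` is a right `𝒳`-approximation of `M`. -/
def IsRightApprox (𝒳 : Set (ModuleCat.{u} A)) {X M : ModuleCat.{u} A} (f : X ⟶ M) : Prop :=
  X ∈ 𝒳 ∧ ∀ X' ∈ 𝒳, ∀ g : X' ⟶ M, ∃ h : X' ⟶ X, h ≫ f = g

/-- `f : M ⟶ X` is a left `𝒳`-approximation of `M`. -/
def IsLeftApprox (𝒳 : Set (ModuleCat.{u} A)) {M X : ModuleCat.{u} A} (f : M ⟶ X) : Prop :=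
  X ∈ 𝒳 ∧ ∀ X' ∈ 𝒳, ∀ g : M ⟶ X', ∃ h : X ⟶ X', f ≫ h = g

/-- `Y` is a direct summand of `P`. -/
def IsSummand (Y P : ModuleCat.{u} A) : Prop :=
  ∃ Y' : ModuleCat.{u} A, Nonempty (ModuleCat.of A (Y × Y') ≅ P)

/-- A full subcategory closed under isomorphisms, finite direct sums and direct summands. -/
def ClosedSubcat (𝒳 : Set (ModuleCat.{u} A)) : Prop :=
  (∀ M N : ModuleCat.{u} A, Nonempty (M ≅ N) → M ∈ 𝒳 → N ∈ 𝒳) ∧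
  (∀ M N : ModuleCat.{u} A, M ∈ 𝒳 → N ∈ 𝒳 → ModuleCat.of A (M × N) ∈ 𝒳) ∧
  (∀ M N : ModuleCat.{u} A, ModuleCat.of A (M × N) ∈ 𝒳 → M ∈ 𝒳)

/-- `𝒞` is a 2-cluster-tilting subcategory of `mod A`. -/
def IsClusterTilting₂ (𝒞 : Set (ModuleCat.{u} A)) : Prop :=
  𝒞 ⊆ fdMod A ∧ ClosedSubcat A 𝒞 ∧
  (∀ M ∈ fdMod A, ∃ (X : ModuleCat.{u} A) (f : X ⟶ M), IsRightApprox A 𝒞 f) ∧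
  (∀ M ∈ fdMod A, ∃ (X : ModuleCat.{u} A) (f : M ⟶ X), IsLeftApprox A 𝒞 f) ∧
  (∀ X ∈ fdMod A, (X ∈ 𝒞 ↔ ∀ C ∈ 𝒞, Subsingleton (Abelian.Ext C X 1))) ∧
  (∀ X ∈ fdMod A, (X ∈ 𝒞 ↔ ∀ C ∈ 𝒞, Subsingleton (Abelian.Ext X C 1)))

/-- `𝒳` is 2-contravariantly finite in `𝒞`. -/
def Is2ContraFF (𝒞 𝒳 : Set (ModuleCat.{u} A)) : Prop :=
  ∀ M ∈ 𝒞, ∃ (X₁ X₂ : ModuleCat.{u} A) (f : X₁ ⟶ M) (g : X₂ ⟶ X₁),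
    X₂ ∈ 𝒳 ∧ IsRightApprox A 𝒳 f ∧ g ≫ f = 0 ∧
    (∀ C ∈ 𝒞, ∀ u : C ⟶ M, ∃ v : C ⟶ X₁, v ≫ f = u) ∧
    (∀ C ∈ 𝒞, ∀ v : C ⟶ X₁, v ≫ f = 0 → ∃ w : C ⟶ X₂, w ≫ g = v)

/-- `𝒳` is 2-covariantly finite in `𝒞`. -/
def Is2CoFF (𝒞 𝒳 : Set (ModuleCat.{u} A)) : Prop :=
  ∀ M ∈ 𝒞, ∃ (X₁ X₂ : ModuleCat.{u} A) (f : M ⟶ X₁) (g : X₁ ⟶ X₂),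
    X₂ ∈ 𝒳 ∧ IsLeftApprox A 𝒳 f ∧ f ≫ g = 0 ∧
    (∀ C ∈ 𝒞, ∀ u : M ⟶ C, ∃ v : X₁ ⟶ C, f ≫ v = u) ∧
    (∀ C ∈ 𝒞, ∀ v : X₁ ⟶ C, f ≫ v = 0 → ∃ w : X₂ ⟶ C, g ≫ w = v)

/-- `𝒳` is 2-functorially finite in `𝒞`. -/
def Is2FF (𝒞 𝒳 : Set (ModuleCat.{u} A)) : Prop :=
  Is2ContraFF A 𝒞 𝒳 ∧ Is2CoFF A 𝒞 𝒳

/-- `(𝒯, 𝒻)` is a 2-functorially-finite torsion pair in `𝒞`. -/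
def Is2FFTorsionPair (𝒞 𝒯 𝒻 : Set (ModuleCat.{u} A)) : Prop :=
  Is2FF A 𝒞 𝒯 ∧ Is2FF A 𝒞 𝒻 ∧
  (∀ T ∈ 𝒯, ∀ F ∈ 𝒻, ∀ f : T ⟶ F, f = 0) ∧
  𝒯 = {X | X ∈ 𝒞 ∧ ∀ F ∈ 𝒻, ∀ f : X ⟶ F, f = 0} ∧
  𝒻 = {Y | Y ∈ 𝒞 ∧ ∀ T ∈ 𝒯, ∀ f : T ⟶ Y, f = 0}

/-- `Fac T` for a single module `T`: quotients of finite direct sums of copies of `T`. -/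
def FacM (T : ModuleCat.{u} A) : Set (ModuleCat.{u} A) :=
  {N | ∃ (n : ℕ) (p : ModuleCat.of A (Fin n → T) ⟶ N), Function.Surjective p}

/-- `Fac 𝒳` for a class `𝒳`: quotients of modules in `𝒳`. -/
def FacSet (𝒳 : Set (ModuleCat.{u} A)) : Set (ModuleCat.{u} A) :=
  {N | ∃ X ∈ 𝒳, ∃ p : X ⟶ N, Function.Surjective p}

/-- `Sub 𝒳` for a class `𝒳`: submodules of modules in `𝒳`. -/
def SubSet (𝒳 : Set (ModuleCat.{u} A)) : Set (ModuleCat.{u} A) :=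
  {N | ∃ X ∈ 𝒳, ∃ i : N ⟶ X, Function.Injective i}

/-- `add T`: direct summands of finite direct sums of copies of `T`. -/
def addM (T : ModuleCat.{u} A) : Set (ModuleCat.{u} A) :=
  {N | ∃ n : ℕ, IsSummand A N (ModuleCat.of A (Fin n → T))}

open LinearMap

section FittingRetract

variable {R M P : Type*} [Ring R] [AddCommGroup M] [Module R M] [AddCommGroup P] [Module R P]

theorem Module.Projective.of_bijective_comp [Module.Projective R P] (i : M →ₗ[R] P)
    (s : P →ₗ[R] M) (hsi : Function.Bijective (s ∘ₗ i)) : Module.Projective R M := by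
  let θ := LinearEquiv.ofBijective _ hsi
  refine .of_split (i ∘ₗ θ.symm.toLinearMap) s (LinearMap.ext fun m => ?_)
  exact θ.apply_symm_apply m

theorem LinearMap.bijective_rangeRestrict_comp_subtype_of_isCompl {φ : Module.End R M}
    (h : IsCompl (ker φ) (range φ)) :
    Function.Bijective (φ.rangeRestrict ∘ₗ (range φ).subtype) := by
  refine ⟨fun w₁ w₂ hw => Subtype.ext ?_, fun ⟨_, z, rfl⟩ => ?_⟩
  · have hker : (w₁ - w₂ : M) ∈ ker φ := by
      simpa [sub_eq_zero] using congrArg Subtype.val hw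
    exact sub_eq_zero.mp <| Submodule.disjoint_def.mp h.disjoint _ hker (sub_mem w₁.2 w₂.2)
  · obtain ⟨a, ha, b, hb, rfl⟩ := Submodule.mem_sup.mp (h.sup_eq_top ▸ Submodule.mem_top (x := z))
    refine ⟨⟨b, hb⟩, Subtype.ext ?_⟩
    simp [mem_ker.mp ha]

theorem Module.Projective.range_of_isCompl_ker_range [Module.Projective R P]
    (k : P →ₗ[R] M) (g : M →ₗ[R] P) (h : IsCompl (ker (k ∘ₗ g)) (range (k ∘ₗ g))) :
    Module.Projective R (range (k ∘ₗ g)) := by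
  set W := range (k ∘ₗ g)
  refine .of_bijective_comp (g ∘ₗ W.subtype) (W.projectionOnto _ h.symm ∘ₗ k) ?_
  convert bijective_rangeRestrict_comp_subtype_of_isCompl h using 1
  ext w
  simp only [coe_comp, Function.comp_apply, Submodule.coe_subtype, codRestrict_apply]
  exact congrArg Subtype.val
    (Submodule.projectionOnto_apply_of_mem_left h.symm (mem_range_self (k ∘ₗ g) (w : M)))

end FittingRetract

theorem LinearMap.eq_zero_of_comp_eq_self_of_isNilpotent {R M N : Type*} [Ring R]
    [AddCommGroup M] [Module R M] [AddCommGroup N] [Module R N] {f : M →ₗ[R] N}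
    {e : Module.End R M} (he : IsNilpotent e) (hfe : f ∘ₗ e = f) : f = 0 := by
  obtain ⟨u, hu⟩ := he.isUnit_one_sub
  have hf : f ∘ₗ (u : Module.End R M) = 0 := by
    rw [hu, Module.End.one_eq_id, comp_sub, comp_id, hfe, sub_self]
  simpa [comp_assoc, ← Module.End.mul_eq_comp, Module.End.one_eq_id] using
    congrArg (· ∘ₗ (↑u⁻¹ : Module.End R M)) hf

section NoProjectiveSummand

variable {A}

def HasNoProjectiveSummand (Z : ModuleCat.{u} A) : Prop :=
  ∀ P : ModuleCat.{u} A, IsSummand A P Z → Module.Projective A P → Subsingleton P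

theorem isSummand_of_isCompl {Z : ModuleCat.{u} A} {p q : Submodule A Z} (h : IsCompl p q) :
    IsSummand A (ModuleCat.of A p) Z :=
  ⟨ModuleCat.of A q, ⟨(Submodule.prodEquivOfIsCompl p q h).toModuleIso⟩⟩

theorem HasNoProjectiveSummand.isNilpotent_comp {Z : ModuleCat.{u} A}
    [IsArtinian A Z] [IsNoetherian A Z] (hZ : HasNoProjectiveSummand Z)
    {P : Type*} [AddCommGroup P] [Module A P] [Module.Projective A P]
    (k : P →ₗ[A] Z) (g : Z →ₗ[A] P) : IsNilpotent (k ∘ₗ g) := by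
  obtain ⟨n, hn⟩ := Filter.eventually_atTop.mp (k ∘ₗ g).eventually_isCompl_ker_pow_range_pow
  have hpow : (k ∘ₗ g) ^ (n + 1) = k ∘ₗ (g ∘ₗ (k ∘ₗ g) ^ n) := by
    rw [pow_succ', Module.End.mul_eq_comp, comp_assoc]
  have hcompl := hn (n + 1) n.le_succ
  rw [hpow] at hcompl
  have hproj := Module.Projective.range_of_isCompl_ker_range k _ hcompl
  have := hZ _ (isSummand_of_isCompl hcompl.symm) hproj
  exact ⟨n + 1, hpow.trans (range_eq_bot.mp Submodule.eq_bot_of_subsingleton)⟩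

end NoProjectiveSummand

theorem stmt14 (K : Type u) [Field K] [Algebra K A] [FiniteDimensional K A]
    (Z X : ModuleCat.{u} A) (hZ : Z ∈ fdMod A)
    (hnoproj : ∀ P : ModuleCat.{u} A, IsSummand A P Z → Module.Projective A P →
      Subsingleton P)
    (f : Z ⟶ X) (hf : f ≠ 0) :
    ¬ ∃ (P : ModuleCat.{u} A) (_ : Module.Projective A P)
        (g : Z ⟶ P) (h : P ⟶ ModuleCat.of A (LinearMap.range (f.hom : Z →ₗ[A] X))),
        ∀ z : Z, h (g z) = LinearMap.rangeRestrict (f.hom : Z →ₗ[A] X) z := by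
  rintro ⟨P, hP, g, h, hcomm⟩
  have : IsArtinianRing A := .of_finite K A
  have : IsNoetherianRing A := isNoetherian_of_tower K inferInstance
  have : Module.Finite A Z := hZ
  obtain ⟨k, hk⟩ := Module.projective_lifting_property f.hom.rangeRestrict h.hom
    f.hom.surjective_rangeRestrict
  have hfe : f.hom.rangeRestrict ∘ₗ (k ∘ₗ g.hom) = f.hom.rangeRestrict := by
    ext z
    rw [← comp_assoc, hk]
    exact congrArg Subtype.val (hcomm z)
  have hf' := eq_zero_of_comp_eq_self_of_isNilpotent
    (HasNoProjectiveSummand.isNilpotent_comp hnoproj k g.hom) hfe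
  refine hf (ModuleCat.hom_ext (LinearMap.ext fun z => ?_))
  simpa using congrArg Subtype.val (LinearMap.congr_fun hf' z)
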